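/- Let a : ℝⁿ → [0,∞) be bounded and Lipschitz continuous with Lipschitz constant L, and let u ∈ W^{1,1}(ℝⁿ) with weak gradient ∇u. Then there is a constant C depending only on n and η such that for every x ∈ ℝⁿ and every δ > 0, a(x)·|(∇u * η_δ)(x)| ≤ C·( M(a|∇u|)(x) + L·Mu(x) ). -/

import Mathlib

noncomputable section
open MeasureTheory Metric Set Filter
open scoped ENNReal Topology NNReal RealInnerProductSpace

abbrev Euc (n : ℕ) := EuclideanSpace ℝ (Fin n)

/-- Divergence of a vector field on Euclidean space. -/
def divg {n : ℕ} (φ : Euc n → Euc n) (x : Euc n) : ℝ :=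
  ∑ i, fderiv ℝ (fun y => φ y i) x (EuclideanSpace.single i 1)

/-- `v` is the weak gradient of `u` on `ℝⁿ`. -/
def IsWeakGrad {n : ℕ} (u : Euc n → ℝ) (v : Euc n → Euc n) : Prop :=
  ∀ φ : Euc n → Euc n, ContDiff ℝ 1 φ → HasCompactSupport φ →
    ∫ x, u x * divg φ x = - ∫ x, ⟪v x, φ x⟫

/-- `η` is a standard mollifier. -/
def IsMollifier {n : ℕ} (η : Euc n → ℝ) : Prop :=
  ContDiff ℝ (⊤ : ℕ∞) η ∧ HasCompactSupport η ∧ tsupport η ⊆ closedBall 0 1 ∧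
    (∀ y, 0 ≤ η y) ∧ ∫ y, η y = 1

/-- The rescaled mollifier `η_δ(y) = δ⁻ⁿ η(y/δ)`. -/
def mollifierScaled {n : ℕ} (η : Euc n → ℝ) (δ : ℝ) (y : Euc n) : ℝ :=
  (δ ^ n)⁻¹ * η (δ⁻¹ • y)

/-- Convolution of a vector field `v` with the scaled mollifier, at the point `x`. -/
def mollifyVec {n : ℕ} (η : Euc n → ℝ) (δ : ℝ) (v : Euc n → Euc n) (x : Euc n) : Euc n :=
  ∫ y, mollifierScaled η δ (x - y) • v y

/-- The (centered) Hardy–Littlewood maximal function, with values in `ℝ≥0∞`. -/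
def HLMax {n : ℕ} (g : Euc n → ℝ) (x : Euc n) : ℝ≥0∞ :=
  ⨆ r ∈ Set.Ioi (0 : ℝ), (∫⁻ y in ball x r, ENNReal.ofReal |g y|) / volume (ball x r)

namespace AuxMolli

variable {n : ℕ} {η : Euc n → ℝ}

lemma molli_nonneg (hη : IsMollifier η) {δ : ℝ} (hδ : 0 < δ) (y : Euc n) :
    0 ≤ mollifierScaled η δ y :=
  mul_nonneg (inv_nonneg.2 (pow_nonneg hδ.le n)) (hη.2.2.2.1 _)

lemma molli_eq_zero (hη : IsMollifier η) {δ : ℝ} (hδ : 0 < δ) {z : Euc n}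
    (hz : δ < ‖z‖) : mollifierScaled η δ z = 0 := by
  have h0 : η (δ⁻¹ • z) = 0 := by
    apply image_eq_zero_of_notMem_tsupport
    intro h
    have h1 := hη.2.2.1 h
    rw [mem_closedBall_zero_iff, norm_smul, norm_inv, Real.norm_eq_abs, abs_of_pos hδ] at h1
    have h2 : δ * (δ⁻¹ * ‖z‖) ≤ δ * 1 := mul_le_mul_of_nonneg_left h1 hδ.le
    rw [← mul_assoc, mul_inv_cancel₀ hδ.ne', one_mul, mul_one] at h2
    linarith
  simp [mollifierScaled, h0]

lemma molli_contDiff (hη : IsMollifier η) (δ : ℝ) :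
    ContDiff ℝ (⊤ : ℕ∞) (mollifierScaled η δ) :=
  contDiff_const.mul (hη.1.comp (contDiff_id.const_smul δ⁻¹))

lemma molli_hcs (hη : IsMollifier η) {δ : ℝ} (hδ : 0 < δ) :
    HasCompactSupport (mollifierScaled η δ) := by
  apply HasCompactSupport.intro (isCompact_closedBall (0 : Euc n) δ)
  intro z hz
  rw [mem_closedBall_zero_iff] at hz
  exact molli_eq_zero hη hδ (lt_of_not_ge hz)

lemma molli_integral (hη : IsMollifier η) {δ : ℝ} (hδ : 0 < δ) :
    ∫ y, mollifierScaled η δ y = 1 := by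
  unfold mollifierScaled
  rw [integral_const_mul, Measure.integral_comp_inv_smul_of_nonneg volume η hδ.le,
    finrank_euclideanSpace_fin, hη.2.2.2.2, smul_eq_mul, mul_one,
    inv_mul_cancel₀ (pow_ne_zero _ hδ.ne')]

lemma weakGrad_pairing {u : Euc n → ℝ} {v : Euc n → Euc n} (hwg : IsWeakGrad u v)
    {g : Euc n → ℝ} (hg : ContDiff ℝ 1 g) (hgc : HasCompactSupport g) (i : Fin n) :
    ∫ y, g y * v y i = - ∫ y, u y * fderiv ℝ g y (EuclideanSpace.single i 1) := by
  set e : Euc n := EuclideanSpace.single i (1:ℝ) with he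
  have hφ : ContDiff ℝ 1 (fun y => g y • e) := hg.smul contDiff_const
  have hφc : HasCompactSupport (fun y => g y • e) := hgc.smul_right
  have hdiv : ∀ y, divg (fun y => g y • e) y = fderiv ℝ g y e := by
    intro y
    have hgd : DifferentiableAt ℝ g y := (hg.differentiable one_ne_zero) y
    unfold divg
    have hj : ∀ j : Fin n, fderiv ℝ (fun z => (g z • e) j) y (EuclideanSpace.single j 1)
        = (if j = i then (1:ℝ) else 0) * fderiv ℝ g y (EuclideanSpace.single j 1) := by
      intro j
      have hfun : (fun z => (g z • e) j) = fun z => g z * (if j = i then (1:ℝ) else 0) := by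
        funext z
        simp [he, EuclideanSpace.single_apply, PiLp.smul_apply, smul_eq_mul]
      rw [hfun, fderiv_mul_const hgd]
      split_ifs <;> simp
    rw [Finset.sum_congr rfl fun j _ => hj j]
    simp [ite_mul, Finset.sum_ite_eq', he]
  have heq := hwg _ hφ hφc
  have h1 : (fun y => u y * divg (fun z => g z • e) y)
      = fun y => u y * fderiv ℝ g y e := funext fun y => by rw [hdiv y]
  rw [h1] at heq
  have h2 : (fun y => (⟪v y, g y • e⟫ : ℝ)) = fun y => g y * v y i := by
    funext y
    rw [real_inner_smul_right, he, EuclideanSpace.inner_single_right]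
    simp [mul_comm]
  rw [h2] at heq
  linarith

lemma lint_le_HLMax [Nontrivial (Euc n)] (g : Euc n → ℝ) (x : Euc n) {r : ℝ} (hr : 0 < r) :
    (∫⁻ y in ball x r, ENNReal.ofReal |g y|) ≤ HLMax g x * volume (ball x r) := by
  have h1 : (∫⁻ y in ball x r, ENNReal.ofReal |g y|) / volume (ball x r) ≤ HLMax g x := by
    unfold HLMax
    exact le_biSup (fun r => (∫⁻ y in ball x r, ENNReal.ofReal |g y|) / volume (ball x r)) hr
  have h0 : volume (ball x r) ≠ 0 := (measure_ball_pos volume x hr).ne'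
  have ht : volume (ball x r) ≠ ⊤ := measure_ball_lt_top.ne
  rwa [ENNReal.div_le_iff_le_mul (Or.inl h0) (Or.inl ht)] at h1

end AuxMolli

open AuxMolli

set_option maxHeartbeats 2000000 in
/-- for a bounded `L`-Lipschitz weight `a ≥ 0` and `u ∈ W^{1,1}(ℝⁿ)`,
`a(x)·|(∇u * η_δ)(x)| ≤ C (M(a|∇u|)(x) + L·Mu(x))`, with `C` depending only on `n` and `η`. -/
theorem mollified_gradient_le_maximal_lipschitz_weight
    (n : ℕ) (η : Euc n → ℝ) (hη : IsMollifier η) :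
    ∃ C : ℝ, 0 < C ∧
      ∀ (a : Euc n → ℝ) (L : ℝ≥0), (∀ y, 0 ≤ a y) → (∃ M, ∀ y, a y ≤ M) →
        LipschitzWith L a →
        ∀ (u : Euc n → ℝ) (v : Euc n → Euc n), Integrable u → Integrable v →
          IsWeakGrad u v →
          ∀ (x : Euc n) (δ : ℝ), 0 < δ →
            ENNReal.ofReal (a x * ‖mollifyVec η δ v x‖) ≤
              ENNReal.ofReal C *
                (HLMax (fun y => a y * ‖v y‖) x + (L : ℝ≥0∞) * HLMax u x) := by
  rcases Nat.eq_zero_or_pos n with hn | hn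
  · subst hn
    refine ⟨1, one_pos, ?_⟩
    intro a L ha0 _ _ u v _ _ _ x δ _
    have hz : ‖mollifyVec η δ v x‖ = 0 := by
      rw [EuclideanSpace.norm_eq]
      simp
    rw [hz, mul_zero, ENNReal.ofReal_zero]
    exact zero_le
  haveI : Nontrivial (Euc n) := by
    refine nontrivial_of_ne (EuclideanSpace.single ⟨0, hn⟩ (1:ℝ)) 0 ?_
    intro h
    have := congrArg norm h
    simp at this
  obtain ⟨c0, hc0⟩ := hη.2.1.exists_bound_of_continuous hη.1.continuous
  have hc0nn : 0 ≤ c0 := le_trans (norm_nonneg _) (hc0 0)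
  obtain ⟨c1, hc1⟩ := (hη.2.1.fderiv (𝕜 := ℝ)).exists_bound_of_continuous (hη.1.continuous_fderiv (by simp))
  have hc1nn : 0 ≤ c1 := le_trans (norm_nonneg _) (hc1 0)
  set B : ℝ := (volume (ball (0 : Euc n) 1)).toReal with hBdef
  have hBpos : 0 < B :=
    ENNReal.toReal_pos (measure_ball_pos volume _ one_pos).ne' measure_ball_lt_top.ne
  set C : ℝ := (Real.sqrt n * (c0 + c1) + c0) * 2 ^ n * B + 1 with hCdef
  have hCpos : 0 < C := by
    have h1 : 0 ≤ Real.sqrt n * (c0 + c1) + c0 :=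
      add_nonneg (mul_nonneg (Real.sqrt_nonneg _) (add_nonneg hc0nn hc1nn)) hc0nn
    have h2 : 0 ≤ (Real.sqrt n * (c0 + c1) + c0) * 2 ^ n * B :=
      mul_nonneg (mul_nonneg h1 (by positivity)) hBpos.le
    rw [hCdef]; linarith
  refine ⟨C, hCpos, ?_⟩
  intro a L ha0 hMex haLip u v hu hv hwg x δ hδ
  obtain ⟨M, hM⟩ := hMex
  have hδn : (0:ℝ) < δ ^ n := pow_pos hδ n
  set K : ℝ := 2 * (((δ ^ n)⁻¹ * c0) * ∫ y, ‖v y‖) with hKdef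
  have hvnn : 0 ≤ ∫ y, ‖v y‖ := integral_nonneg fun y => norm_nonneg _
  have hKnn : 0 ≤ K := by
    rw [hKdef]
    exact mul_nonneg (by norm_num)
      (mul_nonneg (mul_nonneg (inv_nonneg.2 hδn.le) hc0nn) hvnn)
  have key : ∀ ε : ℝ, 0 < ε →
      ENNReal.ofReal (a x * ‖mollifyVec η δ v x‖) ≤
        ENNReal.ofReal C * (HLMax (fun y => a y * ‖v y‖) x + (L : ℝ≥0∞) * HLMax u x)
        + ENNReal.ofReal ((L:ℝ) * ε * K) := by
    intro ε hε
    have hεsm : ContDiff ℝ (⊤ : ℕ∞) (mollifierScaled η ε) := molli_contDiff hη ε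
    have hεcs : HasCompactSupport (mollifierScaled η ε) := molli_hcs hη hε
    have hεint : Integrable (mollifierScaled η ε) :=
      hεsm.continuous.integrable_of_hasCompactSupport hεcs
    have hε1 : ∫ t, mollifierScaled η ε t = 1 := molli_integral hη hε
    have hεnn : ∀ t, 0 ≤ mollifierScaled η ε t := molli_nonneg hη hε
    have ha_cont : Continuous a := haLip.continuous
    have hnsE : ∀ (r : ℝ) (w : Euc n), ‖r • w‖ = |r| * ‖w‖ := fun r w => by
      rw [norm_smul r w, Real.norm_eq_abs]
    set b : Euc n → ℝ := fun z => ∫ t, mollifierScaled η ε t * a (z - t) with hbdef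
    have hb_c1 : ContDiff ℝ 1 b := by
      have hbc : b = MeasureTheory.convolution (mollifierScaled η ε) a
          (ContinuousLinearMap.mul ℝ ℝ) volume := by
        funext z; rfl
      have h := hεcs.contDiff_convolution_left (ContinuousLinearMap.mul ℝ ℝ)
        (n := 1) (hεsm.of_le (by simp)) (ha_cont.locallyIntegrable (μ := volume))
      rw [hbc]
      exact_mod_cast h
    have hint_shift : ∀ z : Euc n, Integrable (fun t => mollifierScaled η ε t * a (z - t)) := by
      intro z
      apply Continuous.integrable_of_hasCompactSupport
      · exact hεsm.continuous.mul (ha_cont.comp (continuous_const.sub continuous_id))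
      · exact hεcs.mul_right
    have hb_lip : LipschitzWith L b := by
      apply LipschitzWith.of_dist_le_mul
      intro z1 z2
      rw [Real.dist_eq]
      have hsub : b z1 - b z2 = ∫ t, mollifierScaled η ε t * (a (z1 - t) - a (z2 - t)) := by
        rw [← integral_sub (hint_shift z1) (hint_shift z2)]
        congr 1; funext t; ring
      rw [← Real.norm_eq_abs, hsub]
      have hb1 : ∀ t, ‖mollifierScaled η ε t * (a (z1 - t) - a (z2 - t))‖ ≤
          mollifierScaled η ε t * ((L:ℝ) * dist z1 z2) := by
        intro t
        rw [Real.norm_eq_abs, abs_mul, abs_of_nonneg (hεnn t)]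
        apply mul_le_mul_of_nonneg_left ?_ (hεnn t)
        have h1 := haLip.dist_le_mul (z1 - t) (z2 - t)
        rw [Real.dist_eq, dist_sub_right] at h1
        exact h1
      calc ‖∫ t, mollifierScaled η ε t * (a (z1 - t) - a (z2 - t))‖
          ≤ ∫ t, mollifierScaled η ε t * ((L:ℝ) * dist z1 z2) :=
            norm_integral_le_of_norm_le (hεint.mul_const _) (ae_of_all _ hb1)
        _ = (L:ℝ) * dist z1 z2 := by rw [integral_mul_const, hε1, one_mul]
    have hb_close : ∀ z, |b z - a z| ≤ (L:ℝ) * ε := by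
      intro z
      have hconst : ∫ t, mollifierScaled η ε t * a z = a z := by
        rw [integral_mul_const, hε1, one_mul]
      have hsub : b z - a z = ∫ t, mollifierScaled η ε t * (a (z - t) - a z) := by
        conv_lhs => rw [← hconst]
        rw [← integral_sub (hint_shift z) (hεint.mul_const (a z))]
        congr 1; funext t; ring
      rw [← Real.norm_eq_abs, hsub]
      have hb1 : ∀ t, ‖mollifierScaled η ε t * (a (z - t) - a z)‖ ≤
          mollifierScaled η ε t * ((L:ℝ) * ε) := by
        intro t
        by_cases ht : ‖t‖ ≤ ε
        · rw [Real.norm_eq_abs, abs_mul, abs_of_nonneg (hεnn t)]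
          apply mul_le_mul_of_nonneg_left ?_ (hεnn t)
          have h1 := haLip.dist_le_mul (z - t) z
          rw [Real.dist_eq] at h1
          have h2 : dist (z - t) z = ‖t‖ := by
            rw [dist_eq_norm]; simp
          rw [h2] at h1
          exact h1.trans (mul_le_mul_of_nonneg_left ht L.coe_nonneg)
        · rw [molli_eq_zero hη hε (lt_of_not_ge ht), zero_mul]
          simp
      calc ‖∫ t, mollifierScaled η ε t * (a (z - t) - a z)‖
          ≤ ∫ t, mollifierScaled η ε t * ((L:ℝ) * ε) :=
            norm_integral_le_of_norm_le (hεint.mul_const _) (ae_of_all _ hb1)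
        _ = (L:ℝ) * ε := by rw [integral_mul_const, hε1, one_mul]
    have hb_fderiv : ∀ z, ‖fderiv ℝ b z‖ ≤ (L:ℝ) := fun z =>
      norm_fderiv_le_of_lipschitz ℝ hb_lip
    set ρ : Euc n → ℝ := fun y => mollifierScaled η δ (x - y) with hρdef
    have hρ_cd : ContDiff ℝ (⊤ : ℕ∞) ρ := (molli_contDiff hη δ).comp (contDiff_const.sub contDiff_id)
    have hρ_cont : Continuous ρ := hρ_cd.continuous
    have hρ_nn : ∀ y, 0 ≤ ρ y := fun y => molli_nonneg hη hδ _
    have hρ_bd : ∀ y, |ρ y| ≤ (δ ^ n)⁻¹ * c0 := by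
      intro y
      show |(δ ^ n)⁻¹ * η (δ⁻¹ • (x - y))| ≤ _
      rw [abs_mul, abs_of_nonneg (inv_nonneg.2 hδn.le)]
      exact mul_le_mul_of_nonneg_left
        (by simpa [Real.norm_eq_abs] using hc0 (δ⁻¹ • (x - y))) (inv_nonneg.2 hδn.le)
    have hρ_zero : ∀ y, y ∉ closedBall x δ → ρ y = 0 := by
      intro y hy
      rw [mem_closedBall] at hy
      apply molli_eq_zero hη hδ
      rw [← dist_eq_norm, dist_comm]
      exact lt_of_not_ge hy
    set g : Euc n → ℝ := fun y => ρ y * (b x - b y) with hgdef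
    have hg_cd : ContDiff ℝ 1 g :=
      (hρ_cd.of_le (by simp)).mul (contDiff_const.sub hb_c1)
    have hg_zero : ∀ y, y ∉ closedBall x δ → g y = 0 := fun y hy => by
      show ρ y * (b x - b y) = 0
      rw [hρ_zero y hy, zero_mul]
    have hg_hcs : HasCompactSupport g :=
      HasCompactSupport.intro (isCompact_closedBall x δ) hg_zero
    set m0 : ℝ := (L:ℝ) * ((δ ^ n)⁻¹ * (c0 + c1)) with hm0def
    have hm0nn : 0 ≤ m0 :=
      mul_nonneg L.coe_nonneg (mul_nonneg (inv_nonneg.2 hδn.le) (add_nonneg hc0nn hc1nn))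
    have hb_diff : Differentiable ℝ b := hb_c1.differentiable one_ne_zero
    have hDg_bd : ∀ y ∈ closedBall x δ, ‖fderiv ℝ g y‖ ≤ m0 := by
      intro y hy
      have h1 : HasFDerivAt (fun w : Euc n => δ⁻¹ • (x - w))
          (δ⁻¹ • ((0 : Euc n →L[ℝ] Euc n) - ContinuousLinearMap.id ℝ (Euc n))) y :=
        ((hasFDerivAt_const x y).sub (hasFDerivAt_id y)).const_smul δ⁻¹
      have h2 : HasFDerivAt η (fderiv ℝ η (δ⁻¹ • (x - y))) (δ⁻¹ • (x - y)) :=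
        (hη.1.differentiable (by simp) (δ⁻¹ • (x - y))).hasFDerivAt
      have h3 : HasFDerivAt ρ ((δ ^ n)⁻¹ •
          ((fderiv ℝ η (δ⁻¹ • (x - y))).comp
            (δ⁻¹ • ((0 : Euc n →L[ℝ] Euc n) - ContinuousLinearMap.id ℝ (Euc n))))) y :=
        (h2.comp y h1).const_mul _
      have h5 : HasFDerivAt (fun w => b x - b w) ((0 : Euc n →L[ℝ] ℝ) - fderiv ℝ b y) y :=
        (hasFDerivAt_const (b x) y).sub (hb_diff y).hasFDerivAt
      have h6 := h3.mul h5
      have hfg : fderiv ℝ g y = ρ y • ((0 : Euc n →L[ℝ] ℝ) - fderiv ℝ b y)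
          + (b x - b y) • ((δ ^ n)⁻¹ •
            ((fderiv ℝ η (δ⁻¹ • (x - y))).comp
              (δ⁻¹ • ((0 : Euc n →L[ℝ] Euc n) - ContinuousLinearMap.id ℝ (Euc n))))) :=
        h6.fderiv
      rw [hfg]
      have e1 : ‖ρ y • ((0 : Euc n →L[ℝ] ℝ) - fderiv ℝ b y)‖ ≤ ((δ ^ n)⁻¹ * c0) * (L:ℝ) := by
        rw [norm_smul (ρ y) ((0 : Euc n →L[ℝ] ℝ) - fderiv ℝ b y), zero_sub, norm_neg]
        exact mul_le_mul (by simpa [Real.norm_eq_abs] using hρ_bd y) (hb_fderiv y)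
          (norm_nonneg _) (mul_nonneg (inv_nonneg.2 hδn.le) hc0nn)
      have e3 : ‖(δ ^ n)⁻¹ • ((fderiv ℝ η (δ⁻¹ • (x - y))).comp
          (δ⁻¹ • ((0 : Euc n →L[ℝ] Euc n) - ContinuousLinearMap.id ℝ (Euc n))))‖
          ≤ (δ ^ n)⁻¹ * (c1 * δ⁻¹) := by
        rw [norm_smul ((δ ^ n)⁻¹) ((fderiv ℝ η (δ⁻¹ • (x - y))).comp
          (δ⁻¹ • ((0 : Euc n →L[ℝ] Euc n) - ContinuousLinearMap.id ℝ (Euc n)))),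
          Real.norm_eq_abs, abs_of_nonneg (inv_nonneg.2 hδn.le)]
        apply mul_le_mul_of_nonneg_left ?_ (inv_nonneg.2 hδn.le)
        calc ‖(fderiv ℝ η (δ⁻¹ • (x - y))).comp
              (δ⁻¹ • ((0 : Euc n →L[ℝ] Euc n) - ContinuousLinearMap.id ℝ (Euc n)))‖
            ≤ ‖fderiv ℝ η (δ⁻¹ • (x - y))‖ *
              ‖δ⁻¹ • ((0 : Euc n →L[ℝ] Euc n) - ContinuousLinearMap.id ℝ (Euc n))‖ :=
              ContinuousLinearMap.opNorm_comp_le _ _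
          _ ≤ c1 * δ⁻¹ := by
              apply mul_le_mul (hc1 _) ?_ (norm_nonneg _) hc1nn
              rw [norm_smul δ⁻¹ ((0 : Euc n →L[ℝ] Euc n) - ContinuousLinearMap.id ℝ (Euc n)),
                Real.norm_eq_abs, abs_of_nonneg (inv_nonneg.2 hδ.le), zero_sub, norm_neg]
              calc δ⁻¹ * ‖ContinuousLinearMap.id ℝ (Euc n)‖ ≤ δ⁻¹ * 1 :=
                    mul_le_mul_of_nonneg_left ContinuousLinearMap.norm_id_le
                      (inv_nonneg.2 hδ.le)
                _ = δ⁻¹ := mul_one _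
      have e2 : ‖(b x - b y) • ((δ ^ n)⁻¹ •
          ((fderiv ℝ η (δ⁻¹ • (x - y))).comp
            (δ⁻¹ • ((0 : Euc n →L[ℝ] Euc n) - ContinuousLinearMap.id ℝ (Euc n)))))‖
          ≤ ((L:ℝ) * δ) * ((δ ^ n)⁻¹ * (c1 * δ⁻¹)) := by
        rw [norm_smul (b x - b y) ((δ ^ n)⁻¹ •
          ((fderiv ℝ η (δ⁻¹ • (x - y))).comp
            (δ⁻¹ • ((0 : Euc n →L[ℝ] Euc n) - ContinuousLinearMap.id ℝ (Euc n)))))]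
        apply mul_le_mul ?_ e3 (norm_nonneg _) (mul_nonneg L.coe_nonneg hδ.le)
        rw [Real.norm_eq_abs, ← Real.dist_eq]
        refine (hb_lip.dist_le_mul x y).trans (mul_le_mul_of_nonneg_left ?_ L.coe_nonneg)
        rw [dist_comm]
        exact mem_closedBall.1 hy
      have heq : ((δ ^ n)⁻¹ * c0) * (L:ℝ) + ((L:ℝ) * δ) * ((δ ^ n)⁻¹ * (c1 * δ⁻¹)) = m0 := by
        rw [hm0def]
        field_simp
      calc ‖_ + _‖ ≤ _ + _ := norm_add_le _ _
        _ ≤ ((δ ^ n)⁻¹ * c0) * (L:ℝ) + ((L:ℝ) * δ) * ((δ ^ n)⁻¹ * (c1 * δ⁻¹)) :=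
            add_le_add e1 e2
        _ = m0 := heq
    have hDg_zero : ∀ y, y ∉ closedBall x δ → fderiv ℝ g y = 0 := by
      intro y hy
      by_contra hne
      have h2 : tsupport g ⊆ closedBall x δ :=
        closure_minimal (fun z hz => by
          by_contra hzc
          exact hz (hg_zero z hzc)) isClosed_closedBall
      exact hy (h2 (support_fderiv_subset ℝ (Function.mem_support.2 hne)))
    have hIsmul : ∀ c : Euc n → ℝ, Continuous c → ∀ m : ℝ, (∀ y, |c y| ≤ m) →
        Integrable (fun y => c y • v y) := by
      intro c hc m hm
      exact hv.smul_of_top_right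
        (memLp_top_of_bound hc.aestronglyMeasurable m
          (ae_of_all _ fun y => by rw [Real.norm_eq_abs]; exact hm y))
    have hnormint : ∀ (c : Euc n → ℝ) (m : ℝ), (∀ y, |c y| ≤ m) →
        ‖∫ y, c y • v y‖ ≤ m * ∫ y, ‖v y‖ := by
      intro c m hm
      calc ‖∫ y, c y • v y‖ ≤ ∫ y, ‖c y • v y‖ := norm_integral_le_integral_norm _
        _ ≤ ∫ y, m * ‖v y‖ := by
            apply integral_mono_of_nonneg (ae_of_all _ fun y => norm_nonneg _)
              (hv.norm.const_mul m) (ae_of_all _ fun y => ?_)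
            calc ‖c y • v y‖ = |c y| * ‖v y‖ := hnsE _ _
              _ ≤ m * ‖v y‖ := mul_le_mul_of_nonneg_right (hm y) (norm_nonneg _)
        _ = m * ∫ y, ‖v y‖ := integral_const_mul m _
    have hMnn : 0 ≤ M := le_trans (ha0 x) (hM x)
    set q1 : Euc n → ℝ := fun y => (a x - b x) * ρ y with hq1
    set q3 : Euc n → ℝ := fun y => (b y - a y) * ρ y with hq3
    set q4 : Euc n → ℝ := fun y => a y * ρ y with hq4
    have hb_cont : Continuous b := hb_c1.continuous
    have hq1bd : ∀ y, |q1 y| ≤ ((L:ℝ) * ε) * ((δ ^ n)⁻¹ * c0) := by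
      intro y
      show |(a x - b x) * ρ y| ≤ _
      rw [abs_mul]
      apply mul_le_mul ?_ (hρ_bd y) (abs_nonneg _) (mul_nonneg L.coe_nonneg hε.le)
      rw [abs_sub_comm]
      exact hb_close x
    have hq3bd : ∀ y, |q3 y| ≤ ((L:ℝ) * ε) * ((δ ^ n)⁻¹ * c0) := by
      intro y
      show |(b y - a y) * ρ y| ≤ _
      rw [abs_mul]
      exact mul_le_mul (hb_close y) (hρ_bd y) (abs_nonneg _)
        (mul_nonneg L.coe_nonneg hε.le)
    have hq4bd : ∀ y, |q4 y| ≤ M * ((δ ^ n)⁻¹ * c0) := by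
      intro y
      show |a y * ρ y| ≤ _
      rw [abs_mul]
      apply mul_le_mul ?_ (hρ_bd y) (abs_nonneg _) hMnn
      rw [abs_of_nonneg (ha0 y)]
      exact hM y
    have hgbd : ∀ y, |g y| ≤ ((L:ℝ) * δ) * ((δ ^ n)⁻¹ * c0) := by
      intro y
      by_cases hy : y ∈ closedBall x δ
      · show |ρ y * (b x - b y)| ≤ _
        rw [abs_mul, mul_comm]
        apply mul_le_mul ?_ (hρ_bd y) (abs_nonneg _) (mul_nonneg L.coe_nonneg hδ.le)
        rw [← Real.dist_eq]
        refine (hb_lip.dist_le_mul x y).trans (mul_le_mul_of_nonneg_left ?_ L.coe_nonneg)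
        rw [dist_comm]
        exact mem_closedBall.1 hy
      · rw [hg_zero y hy, abs_zero]
        exact mul_nonneg (mul_nonneg L.coe_nonneg hδ.le)
          (mul_nonneg (inv_nonneg.2 hδn.le) hc0nn)
    have hI1 : Integrable (fun y => q1 y • v y) :=
      hIsmul q1 (continuous_const.mul hρ_cont) _ hq1bd
    have hIg : Integrable (fun y => g y • v y) :=
      hIsmul g (hρ_cont.mul (continuous_const.sub hb_cont)) _ hgbd
    have hI3 : Integrable (fun y => q3 y • v y) :=
      hIsmul q3 ((hb_cont.sub ha_cont).mul hρ_cont) _ hq3bd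
    have hI4 : Integrable (fun y => q4 y • v y) :=
      hIsmul q4 (ha_cont.mul hρ_cont) _ hq4bd
    have hsplit : a x • mollifyVec η δ v x =
        (∫ y, q1 y • v y) + ((∫ y, g y • v y) + ((∫ y, q3 y • v y) + ∫ y, q4 y • v y)) := by
      calc a x • mollifyVec η δ v x = ∫ y, (a x * ρ y) • v y := by
            rw [show mollifyVec η δ v x = ∫ y, ρ y • v y from rfl, ← integral_smul]
            congr 1
            funext y
            rw [smul_smul]
        _ = ∫ y, (q1 y • v y + (g y • v y + (q3 y • v y + q4 y • v y))) := by
            congr 1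
            funext y
            have hco : a x * ρ y = q1 y + (g y + (q3 y + q4 y)) := by
              simp only [hq1, hq3, hq4, hgdef]
              ring
            rw [hco, add_smul, add_smul, add_smul]
        _ = _ := by
            have hI34 : Integrable (fun y => q3 y • v y + q4 y • v y) := hI3.add hI4
            have hIg34 : Integrable (fun y => g y • v y + (q3 y • v y + q4 y • v y)) :=
              hIg.add hI34
            rw [integral_add hI1 hIg34, integral_add hIg hI34, integral_add hI3 hI4]
    have hT1 : ‖∫ y, q1 y • v y‖ ≤ ((L:ℝ) * ε) * (((δ ^ n)⁻¹ * c0) * ∫ y, ‖v y‖) := by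
      have h9 := hnormint q1 _ hq1bd
      rwa [mul_assoc] at h9
    have hT3 : ‖∫ y, q3 y • v y‖ ≤ ((L:ℝ) * ε) * (((δ ^ n)⁻¹ * c0) * ∫ y, ‖v y‖) := by
      have h9 := hnormint q3 _ hq3bd
      rwa [mul_assoc] at h9
    set U : ℝ := ∫ y in ball x (2*δ), |u y| with hUdef
    have hUnn : 0 ≤ U := integral_nonneg fun y => abs_nonneg _
    have hproj : ∀ i : Fin n, (∫ y, g y • v y) i = ∫ y, g y * v y i := by
      intro i
      have h8 := (EuclideanSpace.proj (𝕜 := ℝ) i).integral_comp_comm hIg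
      have h9 : (fun y => (EuclideanSpace.proj (𝕜 := ℝ) i) (g y • v y))
          = fun y => g y * v y i := by
        funext y
        simp [smul_eq_mul]
      rw [h9] at h8
      exact h8.symm
    have hcomp : ∀ i : Fin n, |(∫ y, g y • v y) i| ≤ m0 * U := by
      intro i
      rw [hproj i, weakGrad_pairing hwg hg_cd hg_hcs i, abs_neg]
      have hh_int : Integrable ((ball x (2*δ)).indicator (fun y => m0 * |u y|)) :=
        (hu.abs.const_mul m0).indicator measurableSet_ball
      have hb1 : ∀ y, |u y * fderiv ℝ g y (EuclideanSpace.single i 1)|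
          ≤ (ball x (2*δ)).indicator (fun y => m0 * |u y|) y := by
        intro y
        by_cases hy : y ∈ closedBall x δ
        · have hy2 : y ∈ ball x (2*δ) := by
            rw [mem_ball]
            rw [mem_closedBall] at hy
            linarith
          rw [indicator_of_mem hy2, abs_mul]
          have hDgei : |fderiv ℝ g y (EuclideanSpace.single i 1)| ≤ m0 := by
            calc |fderiv ℝ g y (EuclideanSpace.single i 1)|
                ≤ ‖fderiv ℝ g y‖ * ‖EuclideanSpace.single i (1:ℝ)‖ := by
                  rw [← Real.norm_eq_abs]
                  exact (fderiv ℝ g y).le_opNorm _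
              _ = ‖fderiv ℝ g y‖ := by rw [EuclideanSpace.norm_single, norm_one, mul_one]
              _ ≤ m0 := hDg_bd y hy
          calc |u y| * |fderiv ℝ g y (EuclideanSpace.single i 1)| ≤ |u y| * m0 :=
                mul_le_mul_of_nonneg_left hDgei (abs_nonneg _)
            _ = m0 * |u y| := mul_comm _ _
        · rw [hDg_zero y hy]
          simp only [ContinuousLinearMap.zero_apply, mul_zero, abs_zero]
          exact indicator_nonneg (fun z _ => mul_nonneg hm0nn (abs_nonneg _)) y
      calc |∫ y, u y * fderiv ℝ g y (EuclideanSpace.single i 1)|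
          ≤ ∫ y, |u y * fderiv ℝ g y (EuclideanSpace.single i 1)| := by
            rw [← Real.norm_eq_abs]
            exact (norm_integral_le_integral_norm _).trans (le_of_eq (by
              congr 1))
        _ ≤ ∫ y, (ball x (2*δ)).indicator (fun y => m0 * |u y|) y :=
            integral_mono_of_nonneg (ae_of_all _ fun y => abs_nonneg _) hh_int
              (ae_of_all _ hb1)
        _ = m0 * U := by
            rw [integral_indicator measurableSet_ball, integral_const_mul]
    have hmU : 0 ≤ m0 * U := mul_nonneg hm0nn hUnn
    have hT2 : ‖∫ y, g y • v y‖ ≤ Real.sqrt n * (m0 * U) := by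
      rw [EuclideanSpace.norm_eq]
      have hs : (∑ i, ‖(∫ y, g y • v y) i‖ ^ 2) ≤ (n : ℝ) * (m0 * U)^2 := by
        calc ∑ i, ‖(∫ y, g y • v y) i‖ ^ 2 ≤ ∑ _i : Fin n, (m0 * U)^2 :=
              Finset.sum_le_sum fun i _ => by
                rw [Real.norm_eq_abs]
                exact pow_le_pow_left₀ (abs_nonneg _) (hcomp i) 2
          _ = (n : ℝ) * (m0 * U)^2 := by
              rw [Finset.sum_const, Finset.card_univ, Fintype.card_fin, nsmul_eq_mul]
      calc Real.sqrt (∑ i, ‖(∫ y, g y • v y) i‖ ^ 2) ≤ Real.sqrt ((n:ℝ) * (m0*U)^2) :=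
            Real.sqrt_le_sqrt hs
        _ = Real.sqrt n * (m0 * U) := by
            rw [Real.sqrt_mul (Nat.cast_nonneg n), Real.sqrt_sq hmU]
    have h2δ : (0:ℝ) < 2*δ := by linarith
    have hq4supp : ∀ y, y ∉ ball x (2*δ) → ‖q4 y • v y‖ = 0 := by
      intro y hy
      have hyc : y ∉ closedBall x δ := by
        intro hc
        apply hy
        rw [mem_ball]
        rw [mem_closedBall] at hc
        linarith
      have : q4 y = 0 := by
        show a y * ρ y = 0
        rw [hρ_zero y hyc, mul_zero]
      rw [this, zero_smul, norm_zero]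
    have hAint : Integrable (fun y => a y * ‖v y‖) :=
      hv.norm.bdd_mul (c := M) ha_cont.aestronglyMeasurable
        (ae_of_all _ fun y => by rw [Real.norm_eq_abs, abs_of_nonneg (ha0 y)]; exact hM y)
    have hT4 : ‖∫ y, q4 y • v y‖ ≤ ((δ ^ n)⁻¹ * c0) * ∫ y in ball x (2*δ), a y * ‖v y‖ := by
      calc ‖∫ y, q4 y • v y‖ ≤ ∫ y, ‖q4 y • v y‖ := norm_integral_le_integral_norm _
        _ = ∫ y in ball x (2*δ), ‖q4 y • v y‖ :=
            (setIntegral_eq_integral_of_forall_compl_eq_zero fun y hy => hq4supp y hy).symm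
        _ ≤ ∫ y in ball x (2*δ), ((δ ^ n)⁻¹ * c0) * (a y * ‖v y‖) := by
            apply setIntegral_mono_on hI4.norm.integrableOn
              ((hAint.const_mul _).integrableOn) measurableSet_ball
            intro y _
            rw [hnsE (q4 y) (v y)]
            calc |q4 y| * ‖v y‖ ≤ (a y * ((δ^n)⁻¹ * c0)) * ‖v y‖ := by
                  apply mul_le_mul_of_nonneg_right ?_ (norm_nonneg _)
                  show |a y * ρ y| ≤ _
                  rw [abs_mul, abs_of_nonneg (ha0 y)]
                  exact mul_le_mul_of_nonneg_left (hρ_bd y) (ha0 y)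
              _ = ((δ^n)⁻¹ * c0) * (a y * ‖v y‖) := by ring
        _ = ((δ ^ n)⁻¹ * c0) * ∫ y in ball x (2*δ), a y * ‖v y‖ := integral_const_mul _ _
    have htot : a x * ‖mollifyVec η δ v x‖ ≤
        ((L:ℝ) * ε * K) + (Real.sqrt n * (m0 * U)
          + ((δ ^ n)⁻¹ * c0) * ∫ y in ball x (2*δ), a y * ‖v y‖) := by
      have h10 : a x * ‖mollifyVec η δ v x‖ = ‖a x • mollifyVec η δ v x‖ := by
        rw [hnsE (a x) (mollifyVec η δ v x), abs_of_nonneg (ha0 x)]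
      have hKeq : (L:ℝ) * ε * K = ((L:ℝ)*ε) * (((δ^n)⁻¹*c0) * ∫ y, ‖v y‖)
          + ((L:ℝ)*ε) * (((δ^n)⁻¹*c0) * ∫ y, ‖v y‖) := by
        rw [hKdef]; ring
      rw [h10, hsplit]
      have A1 := norm_add_le (∫ y, q1 y • v y)
        ((∫ y, g y • v y) + ((∫ y, q3 y • v y) + ∫ y, q4 y • v y))
      have A2 := norm_add_le (∫ y, g y • v y) ((∫ y, q3 y • v y) + ∫ y, q4 y • v y)
      have A3 := norm_add_le (∫ y, q3 y • v y) (∫ y, q4 y • v y)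
      linarith
    have hvol : volume (ball x (2*δ)) = ENNReal.ofReal ((2*δ)^n) * volume (ball (0:Euc n) 1) := by
      rw [Measure.addHaar_ball volume x h2δ.le, finrank_euclideanSpace_fin]
    have hvolB : volume (ball (0:Euc n) 1) = ENNReal.ofReal B := by
      rw [hBdef, ENNReal.ofReal_toReal measure_ball_lt_top.ne]
    have hofT2 : ENNReal.ofReal (Real.sqrt n * (m0 * U)) ≤
        ENNReal.ofReal C * ((L:ℝ≥0∞) * HLMax u x) := by
      have hU : ENNReal.ofReal U = ∫⁻ y in ball x (2*δ), ENNReal.ofReal |u y| := by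
        rw [hUdef]
        exact ofReal_integral_eq_lintegral_ofReal hu.abs.integrableOn
          (ae_of_all _ fun y => abs_nonneg _)
      have hU2 : ENNReal.ofReal U ≤ HLMax u x * volume (ball x (2*δ)) := by
        rw [hU]
        exact lint_le_HLMax u x h2δ
      have hCle : Real.sqrt n * (c0 + c1) * 2^n * B ≤ C := by
        have hpos : (0:ℝ) ≤ c0 * 2^n * B :=
          mul_nonneg (mul_nonneg hc0nn (by positivity)) hBpos.le
        rw [hCdef]
        nlinarith [hBpos]
      calc ENNReal.ofReal (Real.sqrt n * (m0 * U))
          = ENNReal.ofReal (Real.sqrt n * m0) * ENNReal.ofReal U := by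
            rw [← ENNReal.ofReal_mul (mul_nonneg (Real.sqrt_nonneg _) hm0nn)]
            congr 1
            ring
        _ ≤ ENNReal.ofReal (Real.sqrt n * m0) * (HLMax u x * volume (ball x (2*δ))) :=
            mul_le_mul_right hU2 _
        _ = (ENNReal.ofReal (Real.sqrt n * m0) * ENNReal.ofReal ((2*δ)^n)
              * ENNReal.ofReal B) * HLMax u x := by
            rw [hvol, hvolB]; ring
        _ = ENNReal.ofReal (Real.sqrt n * m0 * (2*δ)^n * B) * HLMax u x := by
            rw [← ENNReal.ofReal_mul (mul_nonneg (Real.sqrt_nonneg _) hm0nn),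
              ← ENNReal.ofReal_mul (mul_nonneg (mul_nonneg (Real.sqrt_nonneg _) hm0nn)
                (by positivity))]
        _ = ENNReal.ofReal ((L:ℝ) * (Real.sqrt n * (c0 + c1) * 2^n * B)) * HLMax u x := by
            congr 2
            rw [hm0def, mul_pow]
            field_simp
        _ = (L:ℝ≥0∞) * ENNReal.ofReal (Real.sqrt n * (c0 + c1) * 2^n * B) * HLMax u x := by
            rw [ENNReal.ofReal_mul L.coe_nonneg, ENNReal.ofReal_coe_nnreal]
        _ ≤ (L:ℝ≥0∞) * ENNReal.ofReal C * HLMax u x := by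
            apply mul_le_mul_left
            exact mul_le_mul_right (ENNReal.ofReal_le_ofReal hCle) _
        _ = ENNReal.ofReal C * ((L:ℝ≥0∞) * HLMax u x) := by ring
    have hofT4 : ENNReal.ofReal (((δ ^ n)⁻¹ * c0) * ∫ y in ball x (2*δ), a y * ‖v y‖) ≤
        ENNReal.ofReal C * HLMax (fun y => a y * ‖v y‖) x := by
      have hA : ENNReal.ofReal (∫ y in ball x (2*δ), a y * ‖v y‖)
          ≤ HLMax (fun y => a y * ‖v y‖) x * volume (ball x (2*δ)) := by
        rw [ofReal_integral_eq_lintegral_ofReal hAint.integrableOn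
          (ae_of_all _ fun y => mul_nonneg (ha0 y) (norm_nonneg _))]
        refine le_trans (lintegral_mono fun y => ENNReal.ofReal_le_ofReal (le_abs_self _)) ?_
        exact lint_le_HLMax _ x h2δ
      have hCle : c0 * 2^n * B ≤ C := by
        have hpos : (0:ℝ) ≤ Real.sqrt n * (c0 + c1) * 2^n * B :=
          mul_nonneg (mul_nonneg (mul_nonneg (Real.sqrt_nonneg _)
            (add_nonneg hc0nn hc1nn)) (by positivity)) hBpos.le
        rw [hCdef]
        nlinarith
      calc ENNReal.ofReal (((δ ^ n)⁻¹ * c0) * ∫ y in ball x (2*δ), a y * ‖v y‖)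
          = ENNReal.ofReal ((δ ^ n)⁻¹ * c0)
              * ENNReal.ofReal (∫ y in ball x (2*δ), a y * ‖v y‖) := by
            rw [ENNReal.ofReal_mul (mul_nonneg (inv_nonneg.2 hδn.le) hc0nn)]
        _ ≤ ENNReal.ofReal ((δ ^ n)⁻¹ * c0)
              * (HLMax (fun y => a y * ‖v y‖) x * volume (ball x (2*δ))) :=
            mul_le_mul_right hA _
        _ = (ENNReal.ofReal ((δ ^ n)⁻¹ * c0) * ENNReal.ofReal ((2*δ)^n)
              * ENNReal.ofReal B) * HLMax (fun y => a y * ‖v y‖) x := by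
            rw [hvol, hvolB]; ring
        _ = ENNReal.ofReal ((δ ^ n)⁻¹ * c0 * (2*δ)^n * B)
              * HLMax (fun y => a y * ‖v y‖) x := by
            rw [← ENNReal.ofReal_mul (mul_nonneg (inv_nonneg.2 hδn.le) hc0nn),
              ← ENNReal.ofReal_mul (mul_nonneg (mul_nonneg (inv_nonneg.2 hδn.le) hc0nn)
                (by positivity))]
        _ = ENNReal.ofReal (c0 * 2^n * B) * HLMax (fun y => a y * ‖v y‖) x := by
            congr 2
            rw [mul_pow]
            field_simp
        _ ≤ ENNReal.ofReal C * HLMax (fun y => a y * ‖v y‖) x :=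
            mul_le_mul_left (ENNReal.ofReal_le_ofReal hCle) _
    calc ENNReal.ofReal (a x * ‖mollifyVec η δ v x‖)
        ≤ ENNReal.ofReal (((L:ℝ) * ε * K) + (Real.sqrt n * (m0 * U)
            + ((δ ^ n)⁻¹ * c0) * ∫ y in ball x (2*δ), a y * ‖v y‖)) :=
          ENNReal.ofReal_le_ofReal htot
      _ ≤ ENNReal.ofReal ((L:ℝ) * ε * K) + (ENNReal.ofReal (Real.sqrt n * (m0 * U))
            + ENNReal.ofReal (((δ ^ n)⁻¹ * c0) * ∫ y in ball x (2*δ), a y * ‖v y‖)) :=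
          le_trans ENNReal.ofReal_add_le (add_le_add_right ENNReal.ofReal_add_le _)
      _ ≤ ENNReal.ofReal ((L:ℝ) * ε * K) + (ENNReal.ofReal C * ((L:ℝ≥0∞) * HLMax u x)
            + ENNReal.ofReal C * HLMax (fun y => a y * ‖v y‖) x) :=
          add_le_add_right (add_le_add hofT2 hofT4) _
      _ = ENNReal.ofReal C * (HLMax (fun y => a y * ‖v y‖) x + (L:ℝ≥0∞) * HLMax u x)
            + ENNReal.ofReal ((L:ℝ) * ε * K) := by ring
  set R := ENNReal.ofReal C * (HLMax (fun y => a y * ‖v y‖) x + (L : ℝ≥0∞) * HLMax u x)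
    with hRdef
  by_cases hRtop : R = ⊤
  · rw [hRtop]; exact le_top
  apply ENNReal.le_of_forall_pos_le_add
  intro ε' hε' _
  have hden : (0:ℝ) < (L:ℝ) * K + 1 := by positivity
  have hε'R : (0:ℝ) < (ε' : ℝ) := by exact_mod_cast hε'
  have hεp : (0:ℝ) < (ε' : ℝ) / ((L:ℝ) * K + 1) := div_pos hε'R hden
  refine (key _ hεp).trans ?_
  apply add_le_add_right
  have hle : (L:ℝ) * ((ε':ℝ)/((L:ℝ)*K+1)) * K ≤ (ε':ℝ) := by
    have h2 : (L:ℝ)*K * ((ε':ℝ)/((L:ℝ)*K+1)) ≤ ((L:ℝ)*K+1) * ((ε':ℝ)/((L:ℝ)*K+1)) :=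
      mul_le_mul_of_nonneg_right (by linarith) hεp.le
    have h3 : ((L:ℝ)*K+1) * ((ε':ℝ)/((L:ℝ)*K+1)) = ε' := by
      field_simp
    nlinarith [h2, h3]
  calc ENNReal.ofReal ((L:ℝ) * ((ε':ℝ)/((L:ℝ)*K+1)) * K) ≤ ENNReal.ofReal (ε':ℝ) :=
        ENNReal.ofReal_le_ofReal hle
    _ = (ε' : ℝ≥0∞) := ENNReal.ofReal_coe_nnreal
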